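/- arXiv:0706.0671 — 2 statements merged into one kernel-verified Lean document; each statement's English description precedes it below -/
import Mathlib

section
/- Let A be an integral domain of characteristic p > 0 admitting a p-basis {b_i}_{i∈I}. Then the b_i form a p-basis of the fraction field Frac(A). -/
/-- The subring of `p`-th powers of `A` (in characteristic `p` this is exactly the image of
the Frobenius). -/
def pthPowers (A : Type*) [CommRing A] (p : ℕ) : Subring A := Subring.closure (Set.range (· ^ p))

/-- `b : I → A` is a `p`-basis of `A`: the monomials `∏ i, b i ^ ϑ i` for finitely supported
`ϑ : I →₀ ℕ` with values `< p` form a basis of `A` as a module over the subring `A^p`. -/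
def IsPBasis (p : ℕ) {A : Type*} [CommRing A] {I : Type*} (b : I → A) : Prop :=
  LinearIndependent (pthPowers A p)
    (fun ϑ : {ϑ : I →₀ ℕ // ∀ i, ϑ i < p} => ϑ.1.prod fun i e => b i ^ e) ∧
  ⊤ ≤ Submodule.span (pthPowers A p)
    (Set.range fun ϑ : {ϑ : I →₀ ℕ // ∀ i, ϑ i < p} => ϑ.1.prod fun i e => b i ^ e)

/-!
The fraction field `K` of `A` is the localization of `A` at the nonzero `p`-th powers, since
`a / s = a s ^ (p - 1) / s ^ p`, and likewise `K ^ p` is the fraction field of `A ^ p`. So `K` is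
the localization of the `A ^ p`-module `A` at `A ^ p \ {0}`, and localization preserves linear
independence and spanning sets.
-/

section PthPowers

variable {A B : Type*} [CommRing A] [CommRing B] {p : ℕ}

theorem pow_mem_pthPowers (y : A) : y ^ p ∈ pthPowers A p :=
  Subring.subset_closure ⟨y, rfl⟩

theorem pthPowers_eq_range_frobenius [ExpChar A p] : pthPowers A p = (frobenius A p).range :=
  le_antisymm (Subring.closure_le.mpr (by rintro _ ⟨y, rfl⟩; exact ⟨y, rfl⟩))
    (by rintro _ ⟨y, rfl⟩; exact pow_mem_pthPowers y)

theorem mem_pthPowers_iff [ExpChar A p] {x : A} : x ∈ pthPowers A p ↔ ∃ y, y ^ p = x := by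
  rw [pthPowers_eq_range_frobenius]
  rfl

theorem map_mem_pthPowers (f : A →+* B) {x : A} (hx : x ∈ pthPowers A p) :
    f x ∈ pthPowers B p :=
  (Subring.closure_le (t := (pthPowers B p).comap f)).mpr
    (by rintro _ ⟨y, rfl⟩; simpa using pow_mem_pthPowers (f y)) hx

theorem inv_mem_pthPowers {K : Type*} [Field K] [ExpChar K p] {x : K} (hx : x ∈ pthPowers K p) :
    x⁻¹ ∈ pthPowers K p := by
  obtain ⟨y, rfl⟩ := mem_pthPowers_iff.mp hx
  exact inv_pow y p ▸ pow_mem_pthPowers y⁻¹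

theorem pow_mem_nonZeroDivisors_pthPowers [IsDomain A] {s : A} (hs : s ∈ nonZeroDivisors A) :
    (⟨s ^ p, pow_mem_pthPowers s⟩ : pthPowers A p) ∈ nonZeroDivisors (pthPowers A p) :=
  mem_nonZeroDivisors_of_ne_zero
    (Subtype.coe_ne_coe.mp (pow_ne_zero p (nonZeroDivisors.ne_zero hs)))

theorem monomials_map_ringHom (f : A →+* B) {I : Type*} (b : I → A) :
    (fun ϑ : {ϑ : I →₀ ℕ // ∀ i, ϑ i < p} => ϑ.1.prod fun i e => f (b i) ^ e) =
      f ∘ fun ϑ : {ϑ : I →₀ ℕ // ∀ i, ϑ i < p} => ϑ.1.prod fun i e => b i ^ e := by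
  funext ϑ
  simp [map_finsuppProd]

end PthPowers

abbrev pthPowersAlgebra (A B : Type*) [CommRing A] [CommRing B] [Algebra A B] (p : ℕ) :
    Algebra (pthPowers A p) (pthPowers B p) :=
  ((algebraMap A B).restrict _ _ fun _ => map_mem_pthPowers _).toAlgebra

attribute [local instance] pthPowersAlgebra

instance {A B : Type*} [CommRing A] [CommRing B] [Algebra A B] {p : ℕ} :
    IsScalarTower (pthPowers A p) (pthPowers B p) B :=
  IsScalarTower.of_algebraMap_eq fun _ => rfl

section FractionRing

variable (A K : Type*) [CommRing A] [IsDomain A] [Field K] [Algebra A K] [IsFractionRing A K]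
  (p : ℕ)

theorem isFractionRing_pthPowers [ExpChar K p] :
    IsFractionRing (pthPowers A p) (pthPowers K p) where
  map_units s := by
    have hs : algebraMap A K s ≠ 0 :=
      (map_ne_zero_iff _ (IsFractionRing.injective A K)).mpr (by simp [nonZeroDivisors.ne_zero s.2])
    exact .of_mul_eq_one ⟨_, inv_mem_pthPowers (algebraMap (pthPowers A p) (pthPowers K p) s).2⟩
      (Subtype.ext (mul_inv_cancel₀ hs))
  surj z := by
    obtain ⟨y, hy⟩ := mem_pthPowers_iff.mp z.2
    obtain ⟨a, s, hs, rfl⟩ := IsFractionRing.div_surjective (A := A) y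
    refine ⟨⟨⟨a ^ p, pow_mem_pthPowers a⟩, ⟨_, pow_mem_nonZeroDivisors_pthPowers hs⟩⟩,
      Subtype.ext ?_⟩
    change z.1 * algebraMap A K (s ^ p) = algebraMap A K (a ^ p)
    rw [← hy, map_pow, map_pow, div_pow, div_mul_cancel₀]
    exact pow_ne_zero p (IsFractionRing.to_map_ne_zero_of_mem_nonZeroDivisors hs)
  exists_of_eq h :=
    ⟨1, congrArg _ (Subtype.ext (IsFractionRing.injective A K (congrArg Subtype.val h)))⟩

theorem isLocalization_algebraMapSubmonoid_pthPowers (hp : p ≠ 0) :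
    IsLocalization (Algebra.algebraMapSubmonoid A (nonZeroDivisors (pthPowers A p))) K := by
  refine (IsLocalization.iff_of_le_of_exists_dvd _ (nonZeroDivisors A) ?_ ?_).mpr inferInstance
  · rintro _ ⟨s, hs, rfl⟩
    exact mem_nonZeroDivisors_of_ne_zero (by simpa using nonZeroDivisors.ne_zero hs)
  · intro s hs
    exact ⟨s ^ p, ⟨_, pow_mem_nonZeroDivisors_pthPowers hs, rfl⟩, dvd_pow_self s hp⟩

theorem IsPBasis.map_fractionRing [ExpChar K p] {I : Type*} {b : I → A} (hb : IsPBasis p b) :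
    IsPBasis p fun i => algebraMap A K (b i) := by
  have := isFractionRing_pthPowers A K p
  have := isLocalization_algebraMapSubmonoid_pthPowers A K p (expChar_ne_zero K p)
  rw [IsPBasis, monomials_map_ringHom (algebraMap A K) b]
  refine ⟨hb.1.localization_localization (pthPowers K p) (nonZeroDivisors (pthPowers A p)) K, ?_⟩
  rw [Set.range_comp, span_eq_top_localization_localization (pthPowers K p)
    (nonZeroDivisors (pthPowers A p)) K (top_le_iff.mp hb.2)]

end FractionRing

/-- If `A` is an integral domain of characteristic `p > 0` with a `p`-basis
`{b_i}_{i ∈ I}`, then the `b_i` form a `p`-basis of the fraction field `Frac(A)`. -/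
theorem isPBasis_fractionRing {A : Type*} [CommRing A] [IsDomain A] (p : ℕ) (hp : p.Prime)
    [CharP A p] {I : Type*} (b : I → A) (hb : IsPBasis p b) :
    IsPBasis p (fun i => algebraMap A (FractionRing A) (b i)) := by
  have := Fact.mk hp
  have := expChar_of_injective_algebraMap (IsFractionRing.injective A (FractionRing A)) p
  exact hb.map_fractionRing A (FractionRing A) p
end

section
/- Let k ⊆ K ⊆ L be fields of characteristic p > 0. Say an extension E/F has the Epp property if every element of E^{p^∞} = ⋂_n E^{p^n} is algebraic separable over F. If L/K and K/k have the Epp property, then L/k has the Epp property. -/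
/-- The maximal perfect subfield `L^{p^∞} = ⋂_n L^{p^n}` of a field `L`
(in characteristic `p`, `Subfield.closure (Set.range (· ^ p ^ n))` is exactly the subfield of
`p^n`-th powers). -/
def perfectCore (L : Type*) [Field L] (p : ℕ) : Subfield L :=
  ⨅ n : ℕ, Subfield.closure (Set.range (· ^ p ^ n))

/-- An extension `E/F` has the *Epp property* if every element of the maximal perfect subfield
`E^{p^∞}` is algebraic separable over `F`. -/
def HasEppProperty (F E : Type*) [Field F] [Field E] [Algebra F E] (p : ℕ) : Prop :=
  ∀ x ∈ perfectCore E p, ∃ q : Polynomial F, q ≠ 0 ∧ q.Separable ∧ Polynomial.aeval x q = 0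

/-! If `x ∈ L^{p^∞}`, each `p^n`-th root `y` of `x` also lies in `L^{p^∞}`, hence is separable
over `K`; then `K⟮y⟯ = K⟮x⟯`, so `minpoly K x` is `minpoly K y` with its coefficients raised to
the `p^n`-th power. Thus the coefficients of `minpoly K x` lie in `K^{p^∞}` and are separable
over `k`, i.e. lie in the separable closure `S` of `k` in `K`. Now `x` is separable over `S`,
and `S/k` is separable. -/

open Polynomial IntermediateField

section PerfectCore

variable {E : Type*} [Field E] (p : ℕ) [ExpChar E p]

theorem mem_perfectCore_iff {x : E} :
    x ∈ perfectCore E p ↔ ∀ n : ℕ, ∃ y : E, y ^ p ^ n = x := by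
  have closure_eq (n : ℕ) : Subfield.closure (Set.range (· ^ p ^ n : E → E)) =
      (iterateFrobenius E p n).fieldRange := by
    rw [← Subfield.closure_eq (iterateFrobenius E p n).fieldRange]
    congr 1
  simp only [perfectCore, Subfield.mem_iInf, closure_eq, RingHom.mem_fieldRange,
    iterateFrobenius_def]

theorem exists_pow_eq_of_mem_perfectCore {x : E} (hx : x ∈ perfectCore E p) (n : ℕ) :
    ∃ y ∈ perfectCore E p, y ^ p ^ n = x := by
  rw [mem_perfectCore_iff] at hx
  obtain ⟨y, rfl⟩ := hx n
  refine ⟨y, (mem_perfectCore_iff p).2 fun m ↦ ?_, rfl⟩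
  obtain ⟨z, hz⟩ := hx (m + n)
  refine ⟨z, (iterateFrobenius E p n).injective ?_⟩
  simp only [iterateFrobenius_def, ← pow_mul, ← pow_add, hz]

end PerfectCore

theorem isSeparable_of_separable_of_aeval_eq_zero {F E : Type*} [Field F] [Field E]
    [Algebra F E] {x : E} {q : F[X]} (hq : q.Separable) (hx : aeval x q = 0) :
    IsSeparable F x :=
  hq.of_dvd (minpoly.dvd F x hx)

theorem hasEppProperty_iff {F E : Type*} [Field F] [Field E] [Algebra F E] (p : ℕ) :
    HasEppProperty F E p ↔ ∀ x ∈ perfectCore E p, IsSeparable F x := by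
  refine forall₂_congr fun x _ ↦ ⟨?_, fun hx ↦ ?_⟩
  · rintro ⟨q, -, hq, hqx⟩
    exact isSeparable_of_separable_of_aeval_eq_zero hq hqx
  · exact ⟨minpoly F x, minpoly.ne_zero hx.isIntegral, hx, minpoly.aeval F x⟩

theorem minpoly_pow_expChar_pow {K L : Type*} [Field K] [Field L] [Algebra K L]
    (p : ℕ) [ExpChar K p] {y : L} (hy : IsSeparable K y) (n : ℕ) :
    minpoly K (y ^ p ^ n) = (minpoly K y).map (iterateFrobenius K p n) := by
  have : ExpChar L p := expChar_of_injective_algebraMap (algebraMap K L).injective p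
  have hyint := hy.isIntegral
  refine (minpoly.unique_of_degree_le_degree_minpoly _ _
    ((minpoly.monic hyint).map _) ?_ ?_).symm
  · have hfrob : (algebraMap K L).comp (iterateFrobenius K p n) =
        (iterateFrobenius L p n).comp (algebraMap K L) := by
      ext a
      simp [iterateFrobenius_def]
    rw [aeval_def, eval₂_map, hfrob, ← iterateFrobenius_def, ← hom_eval₂, ← aeval_def,
      minpoly.aeval, map_zero]
  · rw [degree_map_eq_of_injective (iterateFrobenius K p n).injective,
      degree_eq_natDegree (minpoly.ne_zero hyint),
      degree_eq_natDegree (minpoly.ne_zero (hyint.pow _)), ← adjoin.finrank hyint,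
      ← adjoin.finrank (hyint.pow _),
      adjoin_simple_eq_adjoin_pow_expChar_pow_of_isSeparable K L hy p n]

theorem coeff_minpoly_mem_perfectCore {K L : Type*} [Field K] [Field L] [Algebra K L]
    (p : ℕ) [ExpChar K p] [ExpChar L p] (hsep : ∀ y ∈ perfectCore L p, IsSeparable K y)
    {x : L} (hx : x ∈ perfectCore L p) (i : ℕ) :
    (minpoly K x).coeff i ∈ perfectCore K p := by
  refine (mem_perfectCore_iff p).2 fun n ↦ ?_
  obtain ⟨y, hy, rfl⟩ := exists_pow_eq_of_mem_perfectCore p hx n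
  rw [minpoly_pow_expChar_pow p (hsep y hy), coeff_map, iterateFrobenius_def]
  exact ⟨_, rfl⟩

theorem IsSeparable.of_isSeparable_coeff_minpoly {k K L : Type*} [Field k] [Field K] [Field L]
    [Algebra k K] [Algebra K L] [Algebra k L] [IsScalarTower k K L] {x : L}
    (hx : IsSeparable K x) (hcoeff : ∀ i, IsSeparable k ((minpoly K x).coeff i)) :
    IsSeparable k x := by
  let S := separableClosure k K
  have hS : ∀ c ∈ ((minpoly K x).coeffs : Set K), c ∈ S.toSubring := by
    intro c hc
    obtain ⟨i, -, rfl⟩ := mem_coeffs_iff.1 hc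
    exact mem_separableClosure_iff.2 (hcoeff i)
  set g : S[X] := (minpoly K x).toSubring S.toSubring hS
  have hmap : g.map (algebraMap S K) = minpoly K x := (minpoly K x).map_toSubring S.toSubring hS
  have hg : aeval x g = 0 := by
    rw [← aeval_map_algebraMap K, hmap, minpoly.aeval]
  have hgsep : g.Separable := by
    rwa [← separable_map (algebraMap S K), hmap]
  exact (isSeparable_of_separable_of_aeval_eq_zero hgsep hg).of_algebra_isSeparable_of_isSeparable
    k

/-- Let `k ⊆ K ⊆ L` be fields of characteristic `p > 0`.  If `L/K` and
`K/k` have the Epp property, then `L/k` has the Epp property. -/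
theorem hasEppProperty_trans {k K L : Type u} [Field k] [Field K] [Field L]
    [Algebra k K] [Algebra K L] [Algebra k L] [IsScalarTower k K L]
    (p : ℕ) (hp : p.Prime) [CharP k p]
    (hLK : HasEppProperty K L p) (hKk : HasEppProperty k K p) :
    HasEppProperty k L p := by
  have : Fact p.Prime := ⟨hp⟩
  have : CharP K p := charP_of_injective_algebraMap (algebraMap k K).injective p
  have : CharP L p := charP_of_injective_algebraMap (algebraMap K L).injective p
  rw [hasEppProperty_iff] at hLK hKk ⊢
  exact fun x hx ↦ (hLK x hx).of_isSeparable_coeff_minpoly fun i ↦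
    hKk _ (coeff_minpoly_mem_perfectCore p hLK hx i)
end
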